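/- Let 0 → A → B → C → 0 be a short exact sequence of divisible-by-finite commutative groups. Writing π₁(G) for the kernel of the projection ρ : Ĝ → G (where Ĝ is the inverse limit along multiplication maps) and π₀(G) := G/G° where G° = ⋂_n nG, there is an exact sequence 0 → π₁(A) → π₁(B) → π₁(C) → π₀(A) → π₀(B) → π₀(C) → 0. -/

import Mathlib

/-- The inverse limit `Ĝ = lim← (G, [m])`: coherent families `(g_n)_{n : ℕ+}`
with `m • g_{n*m} = g_n`, as a subgroup of the product. -/
def Coherent (G : Type*) [AddCommGroup G] : AddSubgroup (ℕ+ → G) where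
  carrier := {g | ∀ n m : ℕ+, (m : ℕ) • g (n * m) = g n}
  zero_mem' := by intro n m; simp
  add_mem' := by
    intro a b ha hb n m
    simp only [Pi.add_apply, smul_add, ha n m, hb n m]
  neg_mem' := by
    intro a ha n m
    simp only [Pi.neg_apply, smul_neg, ha n m]


/-- Multiplication by `n` as an additive group homomorphism. -/
def nsmulHom (G : Type*) [AddCommGroup G] (n : ℕ) : G →+ G where
  toFun x := n • x
  map_zero' := smul_zero n
  map_add' a b := smul_add n a b

/-- `G` is divisible-by-finite: the divisible hull `G° = ⋂_{n≥1} nG`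
has finite index in `G`. -/
def DivisibleByFinite (G : Type*) [AddCommGroup G] : Prop :=
  (⨅ n : ℕ+, (nsmulHom G (n : ℕ)).range).FiniteIndex

/-- The functorially induced map `Ĝ → Ĥ` on inverse limits. -/
def hatMap {A B : Type*} [AddCommGroup A] [AddCommGroup B] (f : A →+ B) :
    Coherent A →+ Coherent B where
  toFun x := ⟨fun n => f (x.1 n), fun n m => by rw [← map_nsmul, x.2 n m]⟩
  map_zero' := by
    apply Subtype.ext; funext n
    simp
  map_add' a b := by
    apply Subtype.ext; funext n
    simp

/-- The projection `ρ = ρ₁ : Ĝ → G` onto the first coordinate. -/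
def rho (G : Type*) [AddCommGroup G] : Coherent G →+ G where
  toFun x := x.1 1
  map_zero' := rfl
  map_add' a b := rfl

/-- `π₁(G) := ker (ρ : Ĝ → G)`. -/
def pi1 (G : Type*) [AddCommGroup G] : AddSubgroup (Coherent G) := (rho G).ker

/-- The divisible hull `G° = ⋂_{n ≥ 1} nG`. -/
def hull (G : Type*) [AddCommGroup G] : AddSubgroup G :=
  ⨅ n : ℕ+, (nsmulHom G (n : ℕ)).range

/-- `π₀(G) := G / G°`. -/
abbrev pi0 (G : Type*) [AddCommGroup G] := G ⧸ hull G

/-- The induced map `π₁(A) → π₁(B)`. -/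
def pi1Map {A B : Type*} [AddCommGroup A] [AddCommGroup B] (f : A →+ B) :
    pi1 A →+ pi1 B where
  toFun x := ⟨hatMap f x.1, by
    have h : ((x : Coherent A) : ℕ+ → A) 1 = 0 := x.2
    show f (((x : Coherent A) : ℕ+ → A) 1) = 0
    rw [h, map_zero]⟩
  map_zero' := by
    apply Subtype.ext; apply Subtype.ext; funext n; simp
  map_add' a b := by
    apply Subtype.ext; apply Subtype.ext; funext n; simp

/-- The induced map `π₀(A) → π₀(B)`. -/
def pi0Map {A B : Type*} [AddCommGroup A] [AddCommGroup B] (f : A →+ B) :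
    pi0 A →+ pi0 B :=
  QuotientAddGroup.map _ _ f (by
    intro x hx
    simp only [hull, AddSubgroup.mem_iInf, AddSubgroup.mem_comap] at *
    intro n
    obtain ⟨y, hy⟩ := hx n
    exact ⟨f y, by simpa [nsmulHom, ← map_nsmul] using congrArg f hy⟩)

/-!
Applying `ρ` maps the sequence `0 → Â → B̂ → Ĉ → 0` to `0 → A → B → C → 0`, and the snake lemma
yields the six-term sequence once the top row is exact and `coker ρ = G / G°`. Left exactness of
`G ↦ Ĝ` is formal. An element of `Ĝ` is determined by its components at `n !`, which form a chain
`(j + 1) • β (j + 1) = β j`. For divisible-by-finite `G` the hull `G°` is divisible, so every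
element of `G°` starts such a chain and `ρ(Ĝ) = G°`. A chain in `C` lifts to a chain in `B` after
multiplication by `K = [A : A°]`: the defects of an arbitrary lift lie in `A`, and `K` pushes them
into the divisible group `A°`, where they are absorbed.
-/

open Function
open scoped Nat

theorem exists_seq_succ_nsmul_eq_sub {H : Type*} [AddCommGroup H] [DivisibleBy H ℕ]
    (x₀ : H) (d : ℕ → H) : ∃ h : ℕ → H, h 0 = x₀ ∧ ∀ j, (j + 1) • h (j + 1) = h j - d j :=
  ⟨fun j => Nat.rec x₀ (fun j hj => DivisibleBy.div (hj - d j) (j + 1)) j, rfl,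
    fun _ => DivisibleBy.div_cancel _ (Nat.succ_ne_zero _)⟩

section Hull

variable {G : Type*} [AddCommGroup G]

theorem mem_hull_iff {x : G} : x ∈ hull G ↔ ∀ n : ℕ+, ∃ y : G, (n : ℕ) • y = x :=
  AddSubgroup.mem_iInf

theorem rho_mem_hull (x : Coherent G) : rho G x ∈ hull G :=
  mem_hull_iff.2 fun n => ⟨x.1 (1 * n), x.2 1 n⟩

namespace DivisibleByFinite

theorem exists_nsmul_mem_hull (hG : DivisibleByFinite G) :
    ∃ K : ℕ+, ∀ x : G, (K : ℕ) • x ∈ hull G :=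
  ⟨⟨(hull G).index, Nat.pos_of_ne_zero hG.1⟩, (hull G).nsmul_index_mem⟩

theorem surjective_nsmul_hull (hG : DivisibleByFinite G) {n : ℕ} (hn : n ≠ 0) :
    Surjective fun x : hull G => n • x := by
  intro x
  obtain ⟨K, hK⟩ := hG.exists_nsmul_mem_hull
  obtain ⟨z, hz⟩ := mem_hull_iff.1 x.2 (n.toPNat (Nat.pos_of_ne_zero hn) * K)
  exact ⟨⟨(K : ℕ) • z, hK z⟩, Subtype.ext <| (mul_smul n (K : ℕ) z).symm.trans hz⟩

noncomputable abbrev divisibleByHull (hG : DivisibleByFinite G) : DivisibleBy (hull G) ℕ :=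
  divisibleByOfSMulRightSurj _ _ hG.surjective_nsmul_hull

end DivisibleByFinite

end Hull

section Chain

variable {G : Type*} [AddCommGroup G]

/-- `β j` plays the role of the component at `j !` of an element of `Coherent G`. -/
def IsFactorialChain (β : ℕ → G) : Prop :=
  ∀ j : ℕ, (j + 1) • β (j + 1) = β j

theorem IsFactorialChain.factorial_div_nsmul {β : ℕ → G} (hβ : IsFactorialChain β) {a b : ℕ}
    (hab : a ≤ b) : (b ! / a !) • β b = β a := by
  induction b, hab using Nat.le_induction with
  | base => simp [Nat.div_self a.factorial_pos]
  | succ b hab ih =>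
    rw [← ih, ← hβ b, smul_smul, Nat.factorial_succ,
      Nat.mul_div_assoc _ (Nat.factorial_dvd_factorial hab), mul_comm]

theorem mul_factorial_div_mul {n m : ℕ} (hn : 0 < n) (hm : 0 < m) :
    m * ((n * m)! / (n * m)) = n ! / n * ((n * m)! / n !) := by
  obtain ⟨q, hq⟩ := Nat.dvd_factorial (Nat.mul_pos hn hm) le_rfl
  obtain ⟨r, hr⟩ := Nat.dvd_factorial hn le_rfl
  obtain ⟨s, hs⟩ := Nat.factorial_dvd_factorial (Nat.le_mul_of_pos_right n hm)
  rw [hq, Nat.mul_div_cancel_left _ (Nat.mul_pos hn hm), ← hq, hs, Nat.mul_div_cancel_left _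
    (Nat.factorial_pos n), hr, Nat.mul_div_cancel_left _ hn]
  apply Nat.eq_of_mul_eq_mul_left hn
  rw [← mul_assoc, ← mul_assoc, ← hr, ← hs, hq]

namespace Coherent

def ofChain (β : ℕ → G) (hβ : IsFactorialChain β) : Coherent G :=
  ⟨fun n => ((n : ℕ)! / n) • β n, fun n m => by
    simp only [PNat.mul_coe, smul_smul, ← hβ.factorial_div_nsmul (Nat.le_mul_of_pos_right n m.pos),
      mul_factorial_div_mul n.pos m.pos]⟩

theorem ofChain_apply (β : ℕ → G) (hβ : IsFactorialChain β) (n : ℕ+) :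
    (ofChain β hβ).1 n = ((n : ℕ)! / n) • β n := rfl

theorem rho_ofChain (β : ℕ → G) (hβ : IsFactorialChain β) : rho G (ofChain β hβ) = β 0 := by
  simpa [rho, ofChain_apply] using hβ 0

end Coherent

end Chain

section Hat

variable {A B C G : Type*} [AddCommGroup A] [AddCommGroup B] [AddCommGroup C] [AddCommGroup G]

theorem Coherent.ext {x y : Coherent G} (h : ∀ n, x.1 n = y.1 n) : x = y :=
  Subtype.ext (funext h)

theorem hatMap_apply (f : A →+ B) (x : Coherent A) (n : ℕ+) : (hatMap f x).1 n = f (x.1 n) := rfl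

theorem range_rho (hG : DivisibleByFinite G) : (rho G).range = hull G := by
  refine le_antisymm (fun _ ⟨x, hx⟩ => hx ▸ rho_mem_hull x) fun x hx => ?_
  let := hG.divisibleByHull
  obtain ⟨h, h0, hh⟩ := exists_seq_succ_nsmul_eq_sub (⟨x, hx⟩ : hull G) 0
  have hchain : IsFactorialChain fun j => (h j : G) := fun j => by
    simpa using congrArg Subtype.val (hh j)
  exact ⟨Coherent.ofChain _ hchain, by rw [Coherent.rho_ofChain, h0]⟩

theorem exact_rho_mk (hG : DivisibleByFinite G) : Exact (rho G) (QuotientAddGroup.mk' (hull G)) :=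
  AddMonoidHom.exact_iff.2 <| by rw [QuotientAddGroup.ker_mk', range_rho hG]

theorem exact_subtype_rho : Exact (pi1 G).subtype (rho G) :=
  AddMonoidHom.exact_iff.2 (AddSubgroup.range_subtype _).symm

theorem hatMap_injective {f : A →+ B} (hf : Injective f) : Injective (hatMap f) :=
  fun _ _ h => Coherent.ext fun n => hf congr($h.1 n)

theorem exact_hatMap {f : A →+ B} {g : B →+ C} (hf : Injective f) (hfg : Exact f g) :
    Exact (hatMap f) (hatMap g) := by
  refine AddMonoidHom.exact_iff.2 <| le_antisymm (fun y hy => ?_) ?_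
  · choose x hx using fun n => (hfg (y.1 n)).1 congr($hy.1 n)
    refine ⟨⟨x, fun n m => hf ?_⟩, Coherent.ext hx⟩
    rw [map_nsmul, hx, hx, y.2 n m]
  · rintro _ ⟨x, rfl⟩
    exact Coherent.ext fun n => hfg.apply_apply_eq_zero (x.1 n)

theorem exists_isFactorialChain_lift {f : A →+ B} {g : B →+ C} (hg : Surjective g)
    (hfg : Exact f g) (hA : DivisibleByFinite A) :
    ∃ K : ℕ+, ∀ γ : ℕ → C, IsFactorialChain γ →
      ∃ β : ℕ → B, IsFactorialChain β ∧ ∀ j, g (β j) = (K : ℕ) • γ j := by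
  obtain ⟨K, hK⟩ := hA.exists_nsmul_mem_hull
  let := hA.divisibleByHull
  refine ⟨K, fun γ hγ => ?_⟩
  let s := surjInv hg ∘ γ
  have hs : ∀ j, g (s j) = γ j := fun j => surjInv_eq hg (γ j)
  have hdefect : ∀ j, ∃ a, f a = (j + 1) • s (j + 1) - s j := fun j =>
    (hfg _).1 (by rw [map_sub, map_nsmul, hs, hs, hγ j, sub_self])
  choose a ha using hdefect
  obtain ⟨h, -, hh⟩ :=
    exists_seq_succ_nsmul_eq_sub (0 : hull A) fun j => ⟨(K : ℕ) • a j, hK (a j)⟩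
  have hh' : ∀ j, (j + 1) • (h (j + 1) : A) = h j - (K : ℕ) • a j := fun j =>
    by simpa using congrArg Subtype.val (hh j)
  refine ⟨fun j => (K : ℕ) • s j + f (h j), fun j => ?_, fun j => ?_⟩
  · have hs' : (j + 1) • s (j + 1) = s j + f (a j) := by rw [ha j]; abel
    simp only [smul_add, smul_comm _ (K : ℕ), hs', ← map_nsmul, hh', map_sub]
    abel
  · rw [map_add, map_nsmul, hs, hfg.apply_apply_eq_zero, add_zero]

theorem surjective_hatMap {f : A →+ B} {g : B →+ C} (hg : Surjective g) (hfg : Exact f g)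
    (hA : DivisibleByFinite A) : Surjective (hatMap g) := by
  intro c
  obtain ⟨K, hK⟩ := exists_isFactorialChain_lift hg hfg hA
  let F : ℕ → ℕ+ := fun j => ⟨j !, j.factorial_pos⟩
  have hγ : IsFactorialChain fun j => c.1 (F j * K) := fun j => by
    have hidx : F (j + 1) * K = F j * K * ⟨j + 1, j.succ_pos⟩ := PNat.eq <|
      show (j + 1)! * K = j ! * K * (j + 1) by rw [Nat.factorial_succ]; ring
    show (j + 1) • c.1 (F (j + 1) * K) = _
    rw [hidx]
    exact c.2 (F j * K) ⟨j + 1, j.succ_pos⟩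
  obtain ⟨β, hβ, hgβ⟩ := hK _ hγ
  refine ⟨Coherent.ofChain β hβ, Coherent.ext fun n => ?_⟩
  have hn : (n : ℕ) ∣ (n : ℕ)! := Nat.dvd_factorial n.pos le_rfl
  let q : ℕ+ := ⟨(n : ℕ)! / n * K,
    Nat.mul_pos (Nat.div_pos (Nat.le_of_dvd (Nat.factorial_pos _) hn) n.pos) K.pos⟩
  have hq : n * q = F n * K := PNat.eq <|
    show (n : ℕ) * ((n : ℕ)! / n * K) = (n : ℕ)! * K by rw [← mul_assoc, Nat.mul_div_cancel' hn]
  rw [hatMap_apply, Coherent.ofChain_apply, map_nsmul, hgβ, smul_smul, ← c.2 n q, hq]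
  rfl

end Hat

section SixTerm

variable {A B C : Type*} [AddCommGroup A] [AddCommGroup B] [AddCommGroup C]
  {f : A →+ B} {g : B →+ C}

theorem injective_pi1Map (hf : Injective f) : Injective (pi1Map f) :=
  fun _ _ h => Subtype.ext (hatMap_injective hf congr($h.1))

theorem exact_pi1Map (hf : Injective f) (hfg : Exact f g) : Exact (pi1Map f) (pi1Map g) := by
  intro y
  constructor
  · intro hy
    obtain ⟨x, hx⟩ := (exact_hatMap hf hfg y.1).1 congr($hy.1)
    refine ⟨⟨x, hf ?_⟩, Subtype.ext hx⟩
    rw [map_zero, ← y.2]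
    exact congr($hx.1 1)
  · rintro ⟨x, rfl⟩
    exact Subtype.ext ((exact_hatMap hf hfg).apply_apply_eq_zero x.1)

theorem exact_pi0Map (hg : Surjective g) (hfg : Exact f g) (hB : DivisibleByFinite B) :
    Exact (pi0Map f) (pi0Map g) := by
  refine AddMonoidHom.exact_iff.2 <| le_antisymm (fun y hy => ?_) ?_
  · induction y using QuotientAddGroup.induction_on with | H b => ?_
    obtain ⟨K, hK⟩ := hB.exists_nsmul_mem_hull
    obtain ⟨c, hc⟩ := mem_hull_iff.1 ((QuotientAddGroup.eq_zero_iff _).1 hy) K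
    obtain ⟨b', rfl⟩ := hg c
    obtain ⟨a, ha⟩ := (hfg (b - (K : ℕ) • b')).1 (by rw [map_sub, map_nsmul, hc, sub_self])
    refine ⟨a, (QuotientAddGroup.eq_iff_sub_mem).2 ?_⟩
    simpa [ha] using neg_mem (hK b')
  · rintro _ ⟨x, rfl⟩
    induction x using QuotientAddGroup.induction_on with | H a => ?_
    exact congrArg _ (hfg.apply_apply_eq_zero a)

theorem surjective_pi0Map (hg : Surjective g) : Surjective (pi0Map g) :=
  QuotientAddGroup.map_surjective_of_surjective _ _ _ (QuotientAddGroup.mk_surjective.comp hg) _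

variable (f g) in
noncomputable def pi1Connecting (hf : Injective f) (hg : Surjective g) (hfg : Exact f g)
    (hA : DivisibleByFinite A) : pi1 C →+ pi0 A :=
  (SnakeLemma.δ' (rho A).toIntLinearMap (rho B).toIntLinearMap (rho C).toIntLinearMap
    (hatMap f).toIntLinearMap (hatMap g).toIntLinearMap (exact_hatMap hf hfg)
    f.toIntLinearMap g.toIntLinearMap hfg rfl rfl (pi1 C).subtype.toIntLinearMap exact_subtype_rho
    (QuotientAddGroup.mk' (hull A)).toIntLinearMap (exact_rho_mk hA)
    (surjective_hatMap hg hfg hA) hf).toAddMonoidHom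

theorem exact_pi1Map_pi1Connecting (hf : Injective f) (hg : Surjective g) (hfg : Exact f g)
    (hA : DivisibleByFinite A) : Exact (pi1Map g) (pi1Connecting f g hf hg hfg hA) := by
  rw [pi1Connecting, LinearMap.toAddMonoidHom_coe]
  apply SnakeLemma.exact_δ'_right (ι₂ := (pi1 B).subtype.toIntLinearMap)
    (F := (pi1Map g).toIntLinearMap)
  case hι₂ => exact exact_subtype_rho
  case hF => rfl
  case h => exact Subtype.val_injective

theorem exact_pi1Connecting_pi0Map (hf : Injective f) (hg : Surjective g) (hfg : Exact f g)
    (hA : DivisibleByFinite A) (hB : DivisibleByFinite B) :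
    Exact (pi1Connecting f g hf hg hfg hA) (pi0Map f) := by
  rw [pi1Connecting, LinearMap.toAddMonoidHom_coe]
  apply SnakeLemma.exact_δ'_left (π₂ := (QuotientAddGroup.mk' (hull B)).toIntLinearMap)
    (G := (pi0Map f).toIntLinearMap)
  case hπ₂ => exact exact_rho_mk hB
  case hF => rfl
  case h => exact QuotientAddGroup.mk_surjective

end SixTerm

theorem stmt5_general {A B C : Type*} [AddCommGroup A] [AddCommGroup B] [AddCommGroup C]
    (f : A →+ B) (g : B →+ C)
    (hf : Function.Injective f) (hg : Function.Surjective g)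
    (hfg : Function.Exact f g)
    (hA : DivisibleByFinite A) (hB : DivisibleByFinite B) :
    ∃ δ : pi1 C →+ pi0 A,
      Function.Injective (pi1Map f) ∧
      Function.Exact (pi1Map f) (pi1Map g) ∧
      Function.Exact (pi1Map g) δ ∧
      Function.Exact δ (pi0Map f) ∧
      Function.Exact (pi0Map f) (pi0Map g) ∧
      Function.Surjective (pi0Map g) :=
  ⟨pi1Connecting f g hf hg hfg hA, injective_pi1Map hf, exact_pi1Map hf hfg,
    exact_pi1Map_pi1Connecting hf hg hfg hA, exact_pi1Connecting_pi0Map hf hg hfg hA hB,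
    exact_pi0Map hg hfg hB, surjective_pi0Map hg⟩

/-- The six-term exact sequence
`0 → π₁(A) → π₁(B) → π₁(C) → π₀(A) → π₀(B) → π₀(C) → 0`
associated to a short exact sequence of divisible-by-finite abelian groups. -/
theorem stmt5 {A B C : Type*} [AddCommGroup A] [AddCommGroup B] [AddCommGroup C]
    (f : A →+ B) (g : B →+ C)
    (hf : Function.Injective f) (hg : Function.Surjective g)
    (hfg : Function.Exact f g)
    (hA : DivisibleByFinite A) (hB : DivisibleByFinite B) (hC : DivisibleByFinite C) :
    ∃ δ : pi1 C →+ pi0 A,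
      Function.Injective (pi1Map f) ∧
      Function.Exact (pi1Map f) (pi1Map g) ∧
      Function.Exact (pi1Map g) δ ∧
      Function.Exact δ (pi0Map f) ∧
      Function.Exact (pi0Map f) (pi0Map g) ∧
      Function.Surjective (pi0Map g) :=
  stmt5_general f g hf hg hfg hA hB
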